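/- Let (R, m) be a Noetherian local ring of prime characteristic p > 0. Let I ⊆ J be two ideals of R with I m-primary (J = R is allowed). Then for every q = p^e, λ(R/I^{[q]}) ≤ λ(J/I) · λ(R/m^{[q]}) + λ(R/J^{[q]}), where λ(J/I) denotes the (finite) length of the R-module J/I, and λ(R/J^{[q]}) is interpreted as 0 when J^{[q]} = R. -/

import Mathlib

open IsLocalRing Filter

/-- The length of the `R`-module `M`: the height of `⊤` in the lattice of submodules. -/
noncomputable def moduleLength (R M : Type*) [CommRing R] [AddCommGroup M] [Module R M] : ℕ∞ :=
  Order.height (⊤ : Submodule R M)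

/-- λ(R/I), the length of `R/I`, as an extended natural number. -/
noncomputable def colength {R : Type*} [CommRing R] (I : Ideal R) : ℕ∞ :=
  moduleLength R (R ⧸ I)

/-- λ(R/I) as a natural number (equal to the length when the length is finite). -/
noncomputable def colengthNat {R : Type*} [CommRing R] (I : Ideal R) : ℕ :=
  (colength I).toNat

/-- The Frobenius power `I^{[q]}`, generated by the `q`-th powers of elements of `I`. -/
def frobPow {R : Type*} [CommRing R] (I : Ideal R) (q : ℕ) : Ideal R :=
  Ideal.span ((fun x => x ^ q) '' (I : Set R))

/-- A local ring is regular if its maximal ideal is generated by `dim R` elements. -/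
def IsRegularLocal (R : Type*) [CommRing R] [IsLocalRing R] : Prop :=
  ∃ s : Finset R, Ideal.span (s : Set R) = maximalIdeal R ∧ (s.card : WithBot ℕ∞) = ringKrullDim R

/-- λ(J/I), the length of the `R`-module `J/I`. -/
noncomputable def relLength {R : Type*} [CommRing R] (I J : Ideal R) : ℕ∞ :=
  moduleLength R (J ⧸ Submodule.comap J.subtype (I : Submodule R R))

/-- The height of an ideal: the infimum of the heights (in the poset of prime ideals)
of the primes minimal over it. -/
noncomputable def idealHeight {R : Type*} [CommRing R] (J : Ideal R) : ℕ∞ :=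
  ⨅ P : {P : PrimeSpectrum R // P.asIdeal ∈ J.minimalPrimes}, Order.height P.1

/-!
Induct on `λ(J/I)`. If `I ≠ J`, the finite-length module `J/I` contains a simple submodule, which
is killed by `m`: this gives `x ∈ J \ I` with `m x ⊆ I`, and `K = I + (x)` has `λ(J/K) < λ(J/I)`.
As Frobenius is a ring map, `K^[q] = I^[q] + (x^q)` and `m^[q] x^q ⊆ I^[q]`, so `K^[q]/I^[q]` is a
quotient of `R/m^[q]` and `λ(R/I^[q]) = λ(K^[q]/I^[q]) + λ(R/K^[q]) ≤ λ(R/m^[q]) + λ(R/K^[q])`.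
When `λ(J/I) = ∞` the bound holds because `m^[q] ≠ R`.
-/

section Ideal

variable {R : Type*} [CommRing R]

lemma moduleLength_eq_length (M : Type*) [AddCommGroup M] [Module R M] :
    moduleLength R M = Module.length R M :=
  (Module.length_eq_height R M).symm

lemma colength_ne_zero {I : Ideal R} (hI : I ≠ ⊤) : colength I ≠ 0 := by
  rw [colength, moduleLength_eq_length, Ne, Module.length_eq_zero_iff,
    Ideal.Quotient.subsingleton_iff]
  exact hI

lemma colength_eq_relLength_add_colength {A B : Ideal R} (hAB : A ≤ B) :
    colength A = relLength A B + colength B := by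
  let f := Submodule.mapQ (Submodule.comap B.subtype (A : Submodule R R)) A B.subtype le_rfl
  let g := Submodule.factor (p := (A : Submodule R R)) (p' := B) hAB
  have hf : Function.Injective f := by
    rw [← LinearMap.ker_eq_bot]
    simp [f, Submodule.ker_mapQ]
  have hfg : Function.Exact f g := by
    rw [LinearMap.exact_iff]
    simp [f, g, Submodule.factor, Submodule.ker_mapQ, Submodule.range_mapQ]
  rw [colength, relLength, colength, moduleLength_eq_length, moduleLength_eq_length,
    moduleLength_eq_length, Module.length_eq_add_of_exact f g hf (Submodule.factor_surjective _) hfg]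

lemma relLength_add_one_le {A K B : Ideal R} (hAK : A < K) (hKB : K ≤ B) :
    relLength K B + 1 ≤ relLength A B := by
  simp only [relLength, moduleLength_eq_length, Module.length_quotient]
  refine Order.coheight_add_one_le (lt_of_le_of_ne (Submodule.comap_mono hAK.le) fun h => ?_)
  obtain ⟨x, hxK, hxA⟩ := SetLike.exists_of_lt hAK
  have : (⟨x, hKB hxK⟩ : B) ∈ Submodule.comap B.subtype (K : Submodule R R) := hxK
  rw [← h] at this
  exact hxA this

lemma relLength_sup_span_singleton_le {A C : Ideal R} {y : R} (h : Ideal.span {y} * C ≤ A) :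
    relLength A (A ⊔ Ideal.span {y}) ≤ colength C := by
  set K := A ⊔ Ideal.span {y}
  set A' := Submodule.comap K.subtype (A : Submodule R R)
  have hyK : y ∈ K := Submodule.mem_sup_right (Ideal.mem_span_singleton_self y)
  let g := A'.mkQ ∘ₗ LinearMap.toSpanSingleton R K ⟨y, hyK⟩
  have hCg : (C : Submodule R R) ≤ LinearMap.ker g := fun c hc => by
    simpa [g, A', mul_comm] using Ideal.span_singleton_mul_le_iff.mp h c hc
  have hg : Function.Surjective g := by
    intro z
    obtain ⟨⟨w, hw⟩, rfl⟩ := A'.mkQ_surjective z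
    obtain ⟨a, ha, s, hs, rfl⟩ := Submodule.mem_sup.mp hw
    obtain ⟨r, rfl⟩ := Ideal.mem_span_singleton'.mp hs
    refine ⟨r, (Submodule.Quotient.eq _).mpr ?_⟩
    simpa [A'] using A.neg_mem ha
  rw [relLength, colength, moduleLength_eq_length, moduleLength_eq_length]
  refine Module.length_le_of_surjective (Submodule.liftQ _ g hCg) fun z => ?_
  obtain ⟨r, rfl⟩ := hg z
  exact ⟨Submodule.Quotient.mk r, rfl⟩

theorem IsLocalRing.exists_ne_zero_maximalIdeal_smul_eq_zero [IsLocalRing R]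
    (M : Type*) [AddCommGroup M] [Module R M] [IsArtinian R M] [Nontrivial M] :
    ∃ x : M, x ≠ 0 ∧ ∀ a ∈ maximalIdeal R, a • x = 0 := by
  obtain ⟨N, hN⟩ := IsAtomic.exists_atom (Submodule R M)
  have := isSimpleModule_iff_isAtom.mpr hN
  have := IsSimpleModule.nontrivial R N
  obtain ⟨x, hx⟩ := exists_ne (0 : N)
  have hann : Module.annihilator R N = maximalIdeal R :=
    IsLocalRing.eq_maximalIdeal IsSimpleModule.annihilator_isMaximal
  refine ⟨x, by simpa using hx, fun a ha => ?_⟩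
  rw [← hann] at ha
  exact congrArg Subtype.val (Module.mem_annihilator.mp ha x)

lemma exists_mem_notMem_span_singleton_mul_maximalIdeal_le [IsLocalRing R] {A B : Ideal R}
    (hBA : ¬B ≤ A) (hfin : relLength A B ≠ ⊤) :
    ∃ x ∈ B, x ∉ A ∧ Ideal.span {x} * maximalIdeal R ≤ A := by
  set M := B ⧸ Submodule.comap B.subtype (A : Submodule R R)
  rw [relLength, moduleLength_eq_length, Module.length_ne_top_iff,
    isFiniteLength_iff_isNoetherian_isArtinian] at hfin
  have : IsArtinian R M := hfin.2
  have : Nontrivial M := by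
    obtain ⟨x, hxB, hxA⟩ := SetLike.not_le_iff_exists.mp hBA
    exact ⟨Submodule.Quotient.mk ⟨x, hxB⟩, 0,
      by rwa [Ne, Submodule.Quotient.mk_eq_zero]⟩
  obtain ⟨z, hz, hmz⟩ := IsLocalRing.exists_ne_zero_maximalIdeal_smul_eq_zero (R := R) M
  obtain ⟨⟨x, hxB⟩, rfl⟩ := Submodule.mkQ_surjective _ z
  refine ⟨x, hxB, fun hxA => hz ((Submodule.Quotient.mk_eq_zero _).mpr hxA),
    Ideal.span_singleton_mul_le_iff.mpr fun a ha => ?_⟩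
  simpa [mul_comm] using (Submodule.Quotient.mk_eq_zero _).mp (hmz a ha)

end Ideal

theorem colength_map_le_of_relLength_le {R S : Type*} [CommRing R] [IsLocalRing R] [CommRing S]
    (f : R →+* S) {A B : Ideal R} (hAB : A ≤ B) {n : ℕ} (hn : relLength A B ≤ n) :
    colength (A.map f) ≤ n * colength ((maximalIdeal R).map f) + colength (B.map f) := by
  induction n generalizing A with
  | zero =>
    obtain rfl | hlt := hAB.eq_or_lt
    · simp
    · have := (relLength_add_one_le hlt le_rfl).trans hn
      simp at this
  | succ n ih =>
    by_cases hBA : B ≤ A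
    · rw [hAB.antisymm hBA]
      exact le_add_self
    obtain ⟨x, hxB, hxA, hmx⟩ :=
      exists_mem_notMem_span_singleton_mul_maximalIdeal_le hBA (hn.trans_lt (by simp)).ne
    set K := A ⊔ Ideal.span {x}
    have hAK : A < K := lt_of_le_of_ne le_sup_left fun h =>
      hxA (h ▸ Submodule.mem_sup_right (Ideal.mem_span_singleton_self x))
    have hKB : K ≤ B := sup_le hAB ((Ideal.span_singleton_le_iff_mem B).mpr hxB)
    have hKn : relLength K B ≤ n := by
      have := (relLength_add_one_le hAK hKB).trans hn
      push_cast at this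
      exact (ENat.add_le_add_iff_right ENat.one_ne_top).mp this
    have hmapK : K.map f = A.map f ⊔ Ideal.span {f x} := by
      rw [Ideal.map_sup, Ideal.map_span, Set.image_singleton]
    have hmfx : Ideal.span {f x} * (maximalIdeal R).map f ≤ A.map f := by
      simpa [Ideal.map_mul, Ideal.map_span] using Ideal.map_mono (f := f) hmx
    calc colength (A.map f)
        = relLength (A.map f) (K.map f) + colength (K.map f) :=
          colength_eq_relLength_add_colength (Ideal.map_mono hAK.le)
      _ ≤ colength ((maximalIdeal R).map f) +
            (n * colength ((maximalIdeal R).map f) + colength (B.map f)) :=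
          add_le_add (hmapK ▸ relLength_sup_span_singleton_le hmfx) (ih hKB hKn)
      _ = ↑(n + 1) * colength ((maximalIdeal R).map f) + colength (B.map f) := by
          push_cast
          ring

lemma frobPow_le_self {R : Type*} [CommRing R] (I : Ideal R) {q : ℕ} (hq : q ≠ 0) :
    frobPow I q ≤ I :=
  Ideal.span_le.mpr <| Set.image_subset_iff.mpr fun _ hx =>
    I.pow_mem_of_mem hx q (Nat.pos_of_ne_zero hq)

lemma frobPow_eq_map_iterateFrobenius {R : Type*} [CommRing R] (p : ℕ) [ExpChar R p]
    (I : Ideal R) (e : ℕ) : frobPow I (p ^ e) = I.map (iterateFrobenius R p e) := by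
  simp only [frobPow, Ideal.map, iterateFrobenius_def]
  rfl

theorem stmt_4_general (R : Type*) [CommRing R] [IsLocalRing R]
    (p : ℕ) (hp : p.Prime) [CharP R p]
    (I J : Ideal R) (hIJ : I ≤ J) :
    ∀ e : ℕ,
      colength (frobPow I (p ^ e)) ≤
        relLength I J * colength (frobPow (maximalIdeal R) (p ^ e)) +
          colength (frobPow J (p ^ e)) := by
  intro e
  have : ExpChar R p := ExpChar.prime hp
  have hm : colength (frobPow (maximalIdeal R) (p ^ e)) ≠ 0 :=
    colength_ne_zero fun h => (maximalIdeal.isMaximal R).ne_top <|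
      top_le_iff.mp (h ▸ frobPow_le_self _ (pow_ne_zero e hp.ne_zero))
  cases hrel : relLength I J with
  | top => simp [ENat.top_mul hm]
  | coe n =>
    simpa only [frobPow_eq_map_iterateFrobenius p] using
      colength_map_le_of_relLength_le (iterateFrobenius R p e) hIJ hrel.le

/-- Let `(R, m)` be a Noetherian local ring of prime characteristic `p > 0` and let
`I ⊆ J` be ideals with `I` `m`-primary (`J = R` allowed). Then for every `q = p^e`,
`λ(R/I^{[q]}) ≤ λ(J/I) · λ(R/m^{[q]}) + λ(R/J^{[q]})`. -/
theorem stmt_4 (R : Type*) [CommRing R] [IsNoetherianRing R] [IsLocalRing R]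
    (p : ℕ) (hp : p.Prime) [CharP R p]
    (I J : Ideal R) (hIJ : I ≤ J) (hI : I.radical = maximalIdeal R) :
    ∀ e : ℕ,
      colength (frobPow I (p ^ e)) ≤
        relLength I J * colength (frobPow (maximalIdeal R) (p ^ e)) +
          colength (frobPow J (p ^ e)) :=
  stmt_4_general R p hp I J hIJ
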